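/- Let f₁, f₂, g₁, g₂ ∈ L^∞. Then S_{f₁,g₁}S_{f₂,g₂} = S_{f₁f₂, g₁g₂} if and only if either (1) f₁ = g₁, or (2) f₂ ∈ H^∞ and conj(g₂) ∈ H^∞. -/

import Mathlib

/-!
Expanding the products gives
`S_{f₁,g₁} S_{f₂,g₂} - S_{f₁f₂,g₁g₂} = M_{f₁-g₁} (P₊ M_{g₂} P₋ - P₋ M_{f₂} P₊)`,
and composing with `P₊` and `P₋` shows that this vanishes iff `M_{f₁-g₁}` kills the ranges of
both `P₋ M_{f₂} P₊` and `P₊ M_{g₂} P₋`. These operators vanish when `f₂` and `ḡ₂` are analytic,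
by the convolution formula for Fourier coefficients of a product.

Conversely let `h = f₁ - g₁ ≠ 0`. The kernel of `M_h` is invariant under `M_z` and `M_z̄`, and
`z P₋(f₂ zᵏ) = P₋(f₂ zᵏ⁺¹) + f̂₂(-k-1)`, `z̄ P₊(g₂ z⁻ᵏ) = P₊(g₂ z⁻ᵏ⁻¹) + ĝ₂(k) z̄`.
So the kernel contains `f̂₂(-k-1)` for `k ≥ 0` and `ĝ₂(k) z̄` for `k > 0`; but `M_h` kills no
nonzero multiple of a character.
-/

noncomputable section

open MeasureTheory Complex ComplexConjugate InnerProductSpace ContinuousLinearMap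

namespace GSIO

instance : Fact (0 < 2 * Real.pi) := ⟨by positivity⟩

/-- The circle, modeled as `ℝ / 2πℤ`. -/
abbrev Circ : Type := AddCircle (2 * Real.pi)

/-- Normalized Haar (arc-length) measure on the circle. -/
abbrev μC : Measure Circ := AddCircle.haarAddCircle

/-- `L²` of the circle. -/
abbrev L2 : Type := Lp ℂ 2 μC

/-- `L^∞` of the circle. -/
abbrev Linf : Type := Lp ℂ ⊤ μC

/-- The Hardy space `H²`: those `L²` functions whose negative Fourier coefficients vanish. -/
def Hardy : Submodule ℂ L2 where
  carrier := {f : L2 | ∀ n : ℤ, n < 0 → fourierCoeff (f : Circ → ℂ) n = 0}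
  zero_mem' := by
    intro n hn
    rw [← fourierBasis_repr]
    simp
  add_mem' := by
    intro a b ha hb n hn
    have ha' := ha n hn
    have hb' := hb n hn
    rw [← fourierBasis_repr] at ha' hb' ⊢
    rw [map_add, lp.coeFn_add, Pi.add_apply, ha', hb', add_zero]
  smul_mem' := by
    intro c a ha n hn
    have ha' := ha n hn
    rw [← fourierBasis_repr] at ha' ⊢
    rw [_root_.map_smul, lp.coeFn_smul, Pi.smul_apply, ha', smul_zero]

theorem isClosed_Hardy : IsClosed (Hardy : Set L2) := by
  have h : (Hardy : Set L2) =
      ⋂ n : {m : ℤ // m < 0}, (fun f : L2 =>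
        (innerSL ℂ (fourierBasis (T := 2 * Real.pi) n.1)) f) ⁻¹' {0} := by
    ext f
    simp only [Set.mem_iInter, Set.mem_preimage, Set.mem_singleton_iff, SetLike.mem_coe]
    constructor
    · intro hf n
      have h1 := hf n.1 n.2
      rw [← fourierBasis_repr, fourierBasis.repr_apply_apply] at h1
      simpa using h1
    · intro hf n hn
      have h1 := hf ⟨n, hn⟩
      rw [← fourierBasis_repr, fourierBasis.repr_apply_apply]
      simpa using h1
  rw [h]
  exact isClosed_iInter fun n =>
    isClosed_singleton.preimage (innerSL ℂ _).continuous

instance : CompleteSpace Hardy := isClosed_Hardy.completeSpace_coe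

/-- The Riesz projection `P₊`, i.e. the orthogonal projection of `L²` onto `H²`. -/
def Pp : L2 →L[ℂ] L2 := Hardy.subtypeL.comp (Hardy.orthogonalProjectionOnto)

/-- `P₋ = I − P₊`. -/
def Pm : L2 →L[ℂ] L2 := ContinuousLinearMap.id ℂ L2 - Pp

/-- The pointwise product of an `L^∞` function with an `L²` function, as an `L²` function. -/
def mulFun (φ : Linf) (x : L2) : L2 :=
  ((Lp.memLp x).smul (r := 2) (Lp.memLp φ)).toLp ((φ : Circ → ℂ) • (x : Circ → ℂ))

theorem mulFun_add (φ : Linf) (x y : L2) : mulFun φ (x + y) = mulFun φ x + mulFun φ y := by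
  rw [mulFun, mulFun, mulFun, ← MemLp.toLp_add]
  apply MemLp.toLp_congr
  filter_upwards [Lp.coeFn_add x y] with t ht
  have ht' : ((x + y : L2) : Circ → ℂ) t = (x : Circ → ℂ) t + (y : Circ → ℂ) t := by
    simpa using ht
  simp only [Pi.mul_apply, Pi.smul_apply, Pi.add_apply, smul_eq_mul, ht']
  ring

theorem mulFun_smul (c : ℂ) (φ : Linf) (x : L2) : mulFun φ (c • x) = c • mulFun φ x := by
  rw [mulFun, mulFun, ← MemLp.toLp_const_smul]
  apply MemLp.toLp_congr
  filter_upwards [Lp.coeFn_smul c x] with t ht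
  have ht' : ((c • x : L2) : Circ → ℂ) t = c * (x : Circ → ℂ) t := by
    simpa using ht
  simp only [Pi.mul_apply, Pi.smul_apply, smul_eq_mul, ht']
  ring

theorem norm_mulFun_le (φ : Linf) (x : L2) : ‖mulFun φ x‖ ≤ ‖φ‖ * ‖x‖ := by
  rw [mulFun, Lp.norm_toLp]
  have h := eLpNorm_smul_le_eLpNorm_top_mul_eLpNorm (μ := μC) 2
    (Lp.aestronglyMeasurable x) (φ : Circ → ℂ)
  refine le_trans (ENNReal.toReal_mono ?_ h) ?_
  · exact ENNReal.mul_ne_top (Lp.eLpNorm_ne_top φ) (Lp.eLpNorm_ne_top x)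
  · rw [ENNReal.toReal_mul, Lp.norm_def, Lp.norm_def]

/-- The multiplication operator `M_φ` on `L²`, for `φ ∈ L^∞`. -/
def mul (φ : Linf) : L2 →L[ℂ] L2 :=
  LinearMap.mkContinuous
    { toFun := mulFun φ
      map_add' := mulFun_add φ
      map_smul' := fun c x => mulFun_smul c φ x }
    ‖φ‖ (fun x => norm_mulFun_le φ x)

/-- Pointwise product in `L^∞`. -/
def mulInf (φ ψ : Linf) : Linf :=
  ((Lp.memLp ψ).smul (r := ⊤) (Lp.memLp φ)).toLp ((φ : Circ → ℂ) • (ψ : Circ → ℂ))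

/-- Complex conjugation on `L^∞`. -/
def conjInf (φ : Linf) : Linf :=
  (show MemLp (fun t => star ((φ : Circ → ℂ) t)) ⊤ μC from
    ⟨continuous_star.comp_aestronglyMeasurable (Lp.aestronglyMeasurable φ), by
      rw [eLpNorm_congr_norm_ae (g := (φ : Circ → ℂ))
        (Filter.Eventually.of_forall fun t => norm_star _)]
      exact Lp.eLpNorm_lt_top φ⟩).toLp _

/-- Complex conjugation on `L²`. -/
def conjL2 (x : L2) : L2 :=
  (show MemLp (fun t => star ((x : Circ → ℂ) t)) 2 μC from
    ⟨continuous_star.comp_aestronglyMeasurable (Lp.aestronglyMeasurable x), by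
      rw [eLpNorm_congr_norm_ae (g := (x : Circ → ℂ))
        (Filter.Eventually.of_forall fun t => norm_star _)]
      exact Lp.eLpNorm_lt_top x⟩).toLp _

/-- The inclusion `L^∞ ⊆ L²` (the measure is finite). -/
def toL2 (φ : Linf) : L2 := ((Lp.memLp φ).mono_exponent le_top).toLp φ

/-- The constant function `c` as an element of `L^∞`. -/
def constInf (c : ℂ) : Linf := (memLp_const c).toLp (fun _ => c)

/-- An `L^∞` function is constant (a.e.). -/
def IsConst (φ : Linf) : Prop := ∃ c : ℂ, φ = constInf c

/-- `φ ∈ H^∞ = L^∞ ∩ H²`: the negative Fourier coefficients of `φ` vanish. -/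
def MemHinf (φ : Linf) : Prop := ∀ n : ℤ, n < 0 → fourierCoeff (φ : Circ → ℂ) n = 0

/-- The coordinate function `z` as an element of `L^∞`. -/
def zInf : Linf := fourierLp (T := 2 * Real.pi) ⊤ 1

/-- The function `z̄` as an element of `L^∞`. -/
def zbarInf : Linf := fourierLp (T := 2 * Real.pi) ⊤ (-1)

/-- The antiunitary operator `V : h ↦ z̄ ⬝ conj h` on `L²`. -/
def Vmap (x : L2) : L2 := mul zbarInf (conjL2 x)

/-- `φ₋ = P₋ φ` for `φ ∈ L^∞`, viewed inside `L²`. -/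
def mI (φ : Linf) : L2 := Pm (toL2 φ)

/-- The rank-one operator `p ⊗ q : x ↦ ⟪x, q⟫ · p` (the inner product being conjugate-linear
in `q`). -/
def rankOne {E : Type*} [NormedAddCommGroup E] [InnerProductSpace ℂ E] (p q : E) : E →L[ℂ] E :=
  (innerSL ℂ q).smulRight p

/-- The Hilbert space direct sum `L² ⊕ L²`. -/
abbrev L2sq : Type := WithLp 2 (L2 × L2)

/-- A pair of `L²` functions, viewed as a vector in `L² ⊕ L²`. -/
def pair (x y : L2) : L2sq := (WithLp.equiv 2 (L2 × L2)).symm (x, y)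

/-- Notation for the pointwise product in `L^∞`. -/
scoped infixl:70 " ⊙ " => GSIO.mulInf

/-- The Toeplitz operator `T_φ = P₊ M_φ P₊` (viewed as acting on the corner `H²` of `L²`). -/
def Toeplitz (φ : Linf) : L2 →L[ℂ] L2 := Pp ∘L mul φ ∘L Pp

/-- The Hankel operator `H_φ = P₋ M_φ P₊ : H² → (H²)^⊥` (as a corner operator on `L²`). -/
def Hankel (φ : Linf) : L2 →L[ℂ] L2 := Pm ∘L mul φ ∘L Pp

/-- The dual Toeplitz operator `T̃_φ = P₋ M_φ P₋` on `(H²)^⊥` (as a corner operator on `L²`). -/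
def dualToeplitz (φ : Linf) : L2 →L[ℂ] L2 := Pm ∘L mul φ ∘L Pm

/-- The generalized Cauchy singular integral operator with symbol `[[f, u], [g, v]]`:
`R x = P₊ f P₊ x + P₋ g P₊ x + P₊ u P₋ x + P₋ v P₋ x`. -/
def Rop (f u g v : Linf) : L2 →L[ℂ] L2 :=
  Pp ∘L mul f ∘L Pp + Pm ∘L mul g ∘L Pp + Pp ∘L mul u ∘L Pm + Pm ∘L mul v ∘L Pm

/-- The singular integral operator `S_{f,g} = M_f P₊ + M_g P₋` on `L²`. -/
def Sop (f g : Linf) : L2 →L[ℂ] L2 := mul f ∘L Pp + mul g ∘L Pm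



/-- Negation `t ↦ -t` preserves the Haar measure of the circle. -/
theorem mp_neg : MeasurePreserving (fun t : Circ => -t) μC μC :=
  Measure.measurePreserving_neg μC

/-- Composition with `t ↦ -t` on `L²`. -/
def reflL2 : L2 →L[ℂ] L2 :=
  (Lp.compMeasurePreservingₗᵢ ℂ (fun t : Circ => -t) mp_neg).toContinuousLinearMap

/-- Composition with `t ↦ -t` on `L^∞`: for `φ ∈ L^∞`, `φ̃(z) = φ(z̄)`. -/
def reflInf (φ : Linf) : Linf := Lp.compMeasurePreserving (fun t : Circ => -t) mp_neg φ

/-- `φ* (z) = conj (φ(z̄))`. -/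
def starInf (φ : Linf) : Linf := conjInf (reflInf φ)

/-- The flip operator `J : (Jh)(z) = z̄ · h(z̄)` on `L²`. -/
def Jop : L2 →L[ℂ] L2 := mul zbarInf ∘L reflL2

/-- The Hankel operator `𝕳_φ = P₊ M_φ J` on `H²` (as a corner operator on `L²`). -/
def HankelPlus (φ : Linf) : L2 →L[ℂ] L2 := Pp ∘L mul φ ∘L Jop ∘L Pp

/-- The adjoint `H*_φ` of the Hankel operator `H_φ`. -/
def HankelAdj (φ : Linf) : L2 →L[ℂ] L2 := ContinuousLinearMap.adjoint (Hankel φ)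

/-- `θ ∈ L^∞` is an inner function: `θ ∈ H^∞` and `|θ| = 1` a.e. -/
def IsInner (θ : Linf) : Prop := MemHinf θ ∧ ∀ᵐ t ∂μC, ‖(θ : Circ → ℂ) t‖ = 1

/-- The orthogonal projection of `L²` onto `K_θ^⊥ = θH² ⊕ z̄·conj(H²)`, namely
`P₋ + M_θ P₊ M_{conj θ}`. -/
def Qproj (θ : Linf) : L2 →L[ℂ] L2 := Pm + mul θ ∘L Pp ∘L mul (conjInf θ)

def coeff (x : L2) (n : ℤ) : ℂ := fourierCoeff (x : Circ → ℂ) n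

theorem coeff_eq_repr (x : L2) (n : ℤ) : coeff x n = fourierBasis.repr x n :=
  (fourierBasis_repr x n).symm

theorem coeff_eq_inner (x : L2) (n : ℤ) : coeff x n = ⟪(fourierBasis n : L2), x⟫_ℂ := by
  rw [coeff_eq_repr, fourierBasis.repr_apply_apply]

theorem coeff_add (x y : L2) (n : ℤ) : coeff (x + y) n = coeff x n + coeff y n := by
  simp only [coeff_eq_repr, map_add, lp.coeFn_add, Pi.add_apply]

theorem coeff_sub (x y : L2) (n : ℤ) : coeff (x - y) n = coeff x n - coeff y n := by
  simp only [coeff_eq_repr, map_sub, lp.coeFn_sub, Pi.sub_apply]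

theorem coeff_smul (c : ℂ) (x : L2) (n : ℤ) : coeff (c • x) n = c * coeff x n := by
  simp only [coeff_eq_repr, _root_.map_smul, lp.coeFn_smul, Pi.smul_apply, smul_eq_mul]

theorem coeff_zero (n : ℤ) : coeff 0 n = 0 := by
  simpa using coeff_smul 0 0 n

theorem coeff_ext {x y : L2} (h : ∀ n, coeff x n = coeff y n) : x = y :=
  fourierBasis.repr.injective <| lp.ext <| funext fun n => by
    rw [← coeff_eq_repr, ← coeff_eq_repr, h]

theorem coeff_basis (k n : ℤ) : coeff (fourierBasis k) n = if n = k then 1 else 0 := by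
  rw [coeff_eq_repr, fourierBasis.repr_self, lp.single_apply, Pi.single_apply]

theorem coeFn_fourierBasis (k : ℤ) : ((fourierBasis k : L2) : Circ → ℂ) =ᵐ[μC] fourier k := by
  rw [coe_fourierBasis]
  exact coeFn_fourierLp 2 k

theorem coeFn_mul (φ : Linf) (x : L2) :
    (mul φ x : Circ → ℂ) =ᵐ[μC] fun t => (φ : Circ → ℂ) t * (x : Circ → ℂ) t :=
  MemLp.coeFn_toLp ((Lp.memLp x).smul (r := 2) (Lp.memLp φ))

theorem coeFn_mulInf (φ ψ : Linf) :
    ((φ ⊙ ψ : Linf) : Circ → ℂ) =ᵐ[μC] fun t => (φ : Circ → ℂ) t * (ψ : Circ → ℂ) t :=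
  MemLp.coeFn_toLp _

theorem coeFn_conjInf (φ : Linf) :
    ((conjInf φ : Linf) : Circ → ℂ) =ᵐ[μC] fun t => conj ((φ : Circ → ℂ) t) :=
  MemLp.coeFn_toLp _

theorem mul_mul_apply (φ ψ : Linf) (x : L2) : mul φ (mul ψ x) = mul (φ ⊙ ψ) x := by
  apply Lp.ext
  filter_upwards [coeFn_mul φ (mul ψ x), coeFn_mul ψ x, coeFn_mul (φ ⊙ ψ) x,
    coeFn_mulInf φ ψ] with t h₁ h₂ h₃ h₄
  rw [h₁, h₂, h₃, h₄, mul_assoc]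

theorem mul_apply_comm (φ ψ : Linf) (x : L2) : mul φ (mul ψ x) = mul ψ (mul φ x) := by
  apply Lp.ext
  filter_upwards [coeFn_mul φ (mul ψ x), coeFn_mul ψ x, coeFn_mul ψ (mul φ x),
    coeFn_mul φ x] with t h₁ h₂ h₃ h₄
  rw [h₁, h₂, h₃, h₄, mul_left_comm]

theorem mul_sub_mul (φ ψ : Linf) : mul φ - mul ψ = mul (φ - ψ) := by
  ext1 x
  apply Lp.ext
  filter_upwards [Lp.coeFn_sub (mul φ x) (mul ψ x), coeFn_mul φ x, coeFn_mul ψ x,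
    coeFn_mul (φ - ψ) x, Lp.coeFn_sub φ ψ] with t h₁ h₂ h₃ h₄ h₅
  rw [sub_apply, h₁, Pi.sub_apply, h₂, h₃, h₄, h₅, Pi.sub_apply, sub_mul]

theorem mul_basis_ne_zero {φ : Linf} (hφ : φ ≠ 0) (k : ℤ) : mul φ (fourierBasis k) ≠ 0 := by
  refine fun h => hφ (Lp.ext ?_)
  filter_upwards [coeFn_mul φ (fourierBasis k), coeFn_fourierBasis k, Lp.coeFn_zero ℂ 2 μC,
    Lp.coeFn_zero ℂ ⊤ μC] with t h₁ h₂ h₃ h₄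
  rw [h, h₃, h₂] at h₁
  have hk : (fourier k t : ℂ) ≠ 0 := Circle.coe_ne_zero _
  rw [h₄, Pi.zero_apply]
  exact (mul_eq_zero.mp h₁.symm).resolve_right hk

theorem fourierCoeff_fourier_mul (f : Circ → ℂ) (j n : ℤ) :
    fourierCoeff (fun t => fourier j t * f t) n = fourierCoeff f (n - j) := by
  refine integral_congr_ae (Filter.Eventually.of_forall fun t => ?_)
  dsimp only
  rw [smul_eq_mul, smul_eq_mul, ← mul_assoc, ← fourier_add, neg_add_eq_sub, ← neg_sub]

theorem fourierCoeff_conj (f : Circ → ℂ) (n : ℤ) :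
    fourierCoeff (fun t => conj (f t)) n = conj (fourierCoeff f (-n)) := by
  rw [fourierCoeff, fourierCoeff, ← integral_conj]
  refine integral_congr_ae (Filter.Eventually.of_forall fun t => ?_)
  simp only [smul_eq_mul, map_mul, neg_neg, ← fourier_neg]

theorem memHinf_conjInf_iff (φ : Linf) :
    MemHinf (conjInf φ) ↔ ∀ n : ℤ, 0 < n → fourierCoeff (φ : Circ → ℂ) n = 0 := by
  have hcoeff (n : ℤ) : fourierCoeff ((conjInf φ : Linf) : Circ → ℂ) n
      = conj (fourierCoeff (φ : Circ → ℂ) (-n)) := by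
    rw [fourierCoeff_congr_ae (coeFn_conjInf φ), fourierCoeff_conj]
  refine ⟨fun h n hn => ?_, fun h n hn => ?_⟩
  · simpa [hcoeff] using h (-n) (by omega)
  · rw [hcoeff, h (-n) (by omega), map_zero]

theorem coeff_mul_basis (φ : Linf) (k n : ℤ) :
    coeff (mul φ (fourierBasis k)) n = fourierCoeff (φ : Circ → ℂ) (n - k) := by
  rw [coeff, ← fourierCoeff_fourier_mul]
  refine congrFun (fourierCoeff_congr_ae ?_) n
  filter_upwards [coeFn_mul φ (fourierBasis k), coeFn_fourierBasis k] with t h₁ h₂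
  rw [h₁, h₂, mul_comm]

theorem coeff_mul_fourierLp (j : ℤ) (x : L2) (n : ℤ) :
    coeff (mul (fourierLp ⊤ j) x) n = coeff x (n - j) := by
  rw [coeff, coeff, ← fourierCoeff_fourier_mul]
  refine congrFun (fourierCoeff_congr_ae ?_) n
  filter_upwards [coeFn_mul (fourierLp ⊤ j) x, coeFn_fourierLp ⊤ j] with t h₁ h₂
  rw [h₁, h₂]

theorem mul_fourierLp_basis (j k : ℤ) :
    mul (fourierLp ⊤ j) (fourierBasis k) = fourierBasis (k + j) :=
  coeff_ext fun n => by simp only [coeff_mul_fourierLp, coeff_basis, sub_eq_iff_eq_add]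

theorem hasSum_coeff_mul (φ : Linf) (x : L2) (n : ℤ) :
    HasSum (fun k => coeff x k * fourierCoeff (φ : Circ → ℂ) (n - k)) (coeff (mul φ x) n) := by
  have h := ((innerSL ℂ (fourierBasis n : L2)).comp (mul φ)).hasSum
    (fourierBasis.hasSum_repr x)
  simpa only [comp_apply, _root_.map_smul, smul_eq_mul, innerSL_apply_apply, inner_smul_right,
    ← coeff_eq_inner, coeff_mul_basis, ← coeff_eq_repr] using h

theorem coeff_mul_eq_zero {φ : Linf} {x : L2} {n : ℤ}
    (h : ∀ k, coeff x k * fourierCoeff (φ : Circ → ℂ) (n - k) = 0) : coeff (mul φ x) n = 0 :=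
  (hasSum_coeff_mul φ x n).unique (by simpa only [h] using hasSum_zero)

theorem Pm_apply (x : L2) : Pm x = x - Pp x := rfl

theorem coeff_Pp (x : L2) (n : ℤ) : coeff (Pp x) n = if n < 0 then 0 else coeff x n := by
  split_ifs with hn
  · exact (Hardy.orthogonalProjectionOnto x).2 n hn
  · have hbasis : (fourierBasis n : L2) ∈ Hardy := fun m hm => by
      rw [← coeff, coeff_basis, if_neg (by omega)]
    have hperp : coeff (x - Pp x) n = 0 := by
      rw [coeff_eq_inner]
      exact (Submodule.mem_orthogonal _ _).1
        (Submodule.sub_starProjection_mem_orthogonal (K := Hardy) x) _ hbasis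
    rw [coeff_sub, sub_eq_zero] at hperp
    exact hperp.symm

theorem coeff_Pm (x : L2) (n : ℤ) : coeff (Pm x) n = if n < 0 then coeff x n else 0 := by
  rw [Pm_apply, coeff_sub, coeff_Pp]
  split_ifs <;> ring

theorem Pp_eq_zero_iff {x : L2} : Pp x = 0 ↔ ∀ n, 0 ≤ n → coeff x n = 0 := by
  refine ⟨fun h n hn => ?_, fun h => coeff_ext fun n => ?_⟩
  · have hn' := congr(coeff $h n)
    rwa [coeff_Pp, if_neg (not_lt.mpr hn), coeff_zero] at hn'
  · rw [coeff_Pp, coeff_zero]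
    split_ifs with hn
    · rfl
    · exact h n (by omega)

theorem Pm_eq_zero_iff {x : L2} : Pm x = 0 ↔ ∀ n < 0, coeff x n = 0 := by
  refine ⟨fun h n hn => ?_, fun h => coeff_ext fun n => ?_⟩
  · have hn' := congr(coeff $h n)
    rwa [coeff_Pm, if_pos hn, coeff_zero] at hn'
  · rw [coeff_Pm, coeff_zero]
    split_ifs with hn
    · exact h n hn
    · rfl

theorem Pp_basis_of_nonneg {k : ℤ} (hk : 0 ≤ k) : Pp (fourierBasis k) = fourierBasis k := by
  have hPm : Pm (fourierBasis k) = 0 :=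
    Pm_eq_zero_iff.2 fun n hn => by rw [coeff_basis, if_neg (by omega)]
  rwa [Pm_apply, sub_eq_zero, eq_comm] at hPm

theorem Pm_basis_of_neg {k : ℤ} (hk : k < 0) : Pm (fourierBasis k) = fourierBasis k := by
  have hPp : Pp (fourierBasis k) = 0 :=
    Pp_eq_zero_iff.2 fun n hn => by rw [coeff_basis, if_neg (by omega)]
  rw [Pm_apply, hPp, sub_zero]

theorem Pp_comp_Pp : Pp ∘L Pp = Pp := Hardy.isIdempotentElem_starProjection

theorem Pm_comp_Pp : Pm ∘L Pp = 0 := by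
  rw [Pm, sub_comp, Pp_comp_Pp, id_comp, sub_self]

theorem Pp_comp_Pm : Pp ∘L Pm = 0 := by
  rw [Pm, comp_sub, Pp_comp_Pp, comp_id, sub_self]

theorem Pm_comp_Pm : Pm ∘L Pm = Pm := by
  simp only [Pm, sub_comp, comp_sub, id_comp, comp_id, Pp_comp_Pp, sub_self, sub_zero]

theorem mul_zInf_Pm (x : L2) :
    mul zInf (Pm x) = Pm (mul zInf x) + coeff x (-1) • fourierBasis 0 :=
  coeff_ext fun n => by
    simp only [zInf, coeff_add, coeff_smul, coeff_mul_fourierLp, coeff_Pm, coeff_basis]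
    rcases lt_trichotomy n 0 with h | rfl | h
    · simp [h, show n - 1 < 0 by omega, h.ne]
    · simp
    · simp [h.not_gt, show ¬n - 1 < 0 by omega, h.ne']

theorem mul_zbarInf_Pp (x : L2) :
    mul zbarInf (Pp x) = Pp (mul zbarInf x) + coeff x 0 • fourierBasis (-1) :=
  coeff_ext fun n => by
    simp only [zbarInf, coeff_add, coeff_smul, coeff_mul_fourierLp, coeff_Pp, coeff_basis,
      sub_neg_eq_add]
    rcases lt_trichotomy n (-1) with h | rfl | h
    · simp [show n < 0 by omega, show n + 1 < 0 by omega, h.ne]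
    · simp
    · simp [show ¬n < 0 by omega, show ¬n + 1 < 0 by omega, h.ne']

def coHankel (φ : Linf) : L2 →L[ℂ] L2 := Pp ∘L mul φ ∘L Pm

theorem Sop_comp_Sop_sub_Sop (f₁ f₂ g₁ g₂ : Linf) :
    Sop f₁ g₁ ∘L Sop f₂ g₂ - Sop (f₁ ⊙ f₂) (g₁ ⊙ g₂)
      = (mul f₁ - mul g₁) ∘L (coHankel g₂ - Hankel f₂) := by
  ext1 x
  simp only [Sop, coHankel, Hankel, comp_apply, sub_apply, add_apply, Pm_apply, map_sub,
    map_add, ← mul_mul_apply]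
  abel

theorem Sop_comp_Sop_eq_iff (f₁ f₂ g₁ g₂ : Linf) :
    Sop f₁ g₁ ∘L Sop f₂ g₂ = Sop (f₁ ⊙ f₂) (g₁ ⊙ g₂) ↔
      (mul f₁ - mul g₁) ∘L Hankel f₂ = 0 ∧ (mul f₁ - mul g₁) ∘L coHankel g₂ = 0 := by
  have hHankel : Hankel f₂ ∘L Pp = Hankel f₂ ∧ Hankel f₂ ∘L Pm = 0 := by
    simp only [Hankel, comp_assoc, Pp_comp_Pp, Pp_comp_Pm, comp_zero, and_self]
  have hcoHankel : coHankel g₂ ∘L Pp = 0 ∧ coHankel g₂ ∘L Pm = coHankel g₂ := by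
    simp only [coHankel, comp_assoc, Pm_comp_Pp, Pm_comp_Pm, comp_zero, and_self]
  rw [← sub_eq_zero, Sop_comp_Sop_sub_Sop]
  refine ⟨fun h => ⟨?_, ?_⟩, fun ⟨hH, hC⟩ => by rw [comp_sub, hH, hC, sub_zero]⟩
  · have hPp := congr($h ∘L Pp)
    rwa [comp_assoc, sub_comp (coHankel g₂), hcoHankel.1, hHankel.1, zero_sub, comp_neg, zero_comp,
      neg_eq_zero] at hPp
  · have hPm := congr($h ∘L Pm)
    rwa [comp_assoc, sub_comp (coHankel g₂), hcoHankel.2, hHankel.2, sub_zero, zero_comp] at hPm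

theorem Hankel_eq_zero_of_memHinf {φ : Linf} (hφ : MemHinf φ) : Hankel φ = 0 := by
  ext1 x
  change Pm (mul φ (Pp x)) = 0
  refine Pm_eq_zero_iff.2 fun n hn => coeff_mul_eq_zero fun k => ?_
  rcases lt_or_ge k 0 with hk | hk
  · rw [coeff_Pp, if_pos hk, zero_mul]
  · rw [hφ (n - k) (by omega), mul_zero]

theorem coHankel_eq_zero_of_memHinf_conjInf {φ : Linf} (hφ : MemHinf (conjInf φ)) :
    coHankel φ = 0 := by
  ext1 x
  change Pp (mul φ (Pm x)) = 0
  refine Pp_eq_zero_iff.2 fun n hn => coeff_mul_eq_zero fun k => ?_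
  rcases lt_or_ge k 0 with hk | hk
  · rw [(memHinf_conjInf_iff φ).1 hφ (n - k) (by omega), mul_zero]
  · rw [coeff_Pm, if_neg (by omega), zero_mul]

theorem memHinf_of_mul_comp_Hankel_eq_zero {h φ : Linf} (hh : h ≠ 0)
    (hH : mul h ∘L Hankel φ = 0) : MemHinf φ := by
  intro n hn
  have hker (k : ℤ) (hk : 0 ≤ k) : mul h (Pm (mul φ (fourierBasis k))) = 0 := by
    simpa only [Hankel, comp_apply, zero_apply, Pp_basis_of_nonneg hk] using congr($hH (fourierBasis k))
  have hshift := congr(mul h $(mul_zInf_Pm (mul φ (fourierBasis (-n - 1)))))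
  rw [mul_apply_comm h zInf, hker _ (by omega), map_zero, mul_apply_comm zInf φ, zInf,
    mul_fourierLp_basis, map_add, hker _ (by omega), zero_add, _root_.map_smul,
    coeff_mul_basis, eq_comm, smul_eq_zero] at hshift
  rwa [show -1 - (-n - 1) = n by ring, or_iff_left (mul_basis_ne_zero hh 0)] at hshift

theorem memHinf_conjInf_of_mul_comp_coHankel_eq_zero {h φ : Linf} (hh : h ≠ 0)
    (hC : mul h ∘L coHankel φ = 0) : MemHinf (conjInf φ) := by
  refine (memHinf_conjInf_iff φ).2 fun n hn => ?_
  have hker (k : ℤ) (hk : k < 0) : mul h (Pp (mul φ (fourierBasis k))) = 0 := by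
    simpa only [coHankel, comp_apply, zero_apply, Pm_basis_of_neg hk] using congr($hC (fourierBasis k))
  have hshift := congr(mul h $(mul_zbarInf_Pp (mul φ (fourierBasis (-n)))))
  rw [mul_apply_comm h zbarInf, hker _ (by omega), map_zero, mul_apply_comm zbarInf φ,
    zbarInf, mul_fourierLp_basis, map_add, hker _ (by omega), zero_add, _root_.map_smul,
    coeff_mul_basis, eq_comm, smul_eq_zero] at hshift
  rwa [zero_sub, neg_neg, or_iff_left (mul_basis_ne_zero hh (-1))] at hshift

/-- `S_{f₁,g₁}S_{f₂,g₂} = S_{f₁f₂,g₁g₂}` iff `f₁ = g₁` or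
`f₂, ḡ₂ ∈ H^∞`. -/
theorem statement15 (f₁ f₂ g₁ g₂ : Linf) :
    Sop f₁ g₁ ∘L Sop f₂ g₂ = Sop (f₁ ⊙ f₂) (g₁ ⊙ g₂) ↔
      f₁ = g₁ ∨ (MemHinf f₂ ∧ MemHinf (conjInf g₂)) := by
  rw [Sop_comp_Sop_eq_iff]
  by_cases hfg : f₁ = g₁
  · simp [hfg]
  have hh : f₁ - g₁ ≠ 0 := sub_ne_zero.mpr hfg
  rw [mul_sub_mul, or_iff_right hfg]
  constructor
  · rintro ⟨hH, hC⟩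
    exact ⟨memHinf_of_mul_comp_Hankel_eq_zero hh hH,
      memHinf_conjInf_of_mul_comp_coHankel_eq_zero hh hC⟩
  · rintro ⟨hf₂, hg₂⟩
    rw [Hankel_eq_zero_of_memHinf hf₂, coHankel_eq_zero_of_memHinf_conjInf hg₂, comp_zero]
    exact ⟨rfl, rfl⟩

end GSIO
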